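/- arXiv:2604.15889 — 2 statements merged into one kernel-verified Lean document; each statement's English description precedes it below -/
import Mathlib

section
/- For n ≥ 3, let X_n^j be the set of states in the ranked coalescent state space with n leaves whose last entry equals j. Then |X_n^n| = 1, |X_n^{n-1}| = 0, |X_n^j| = Fib(n-1-j) for 1 ≤ j ≤ n-2, and |X_n^0| = Fib(n-1) - 1, where Fib denotes the Fibonacci sequence with Fib(1) = Fib(2) = 1. -/
/-- Abstract formalization of the tiered counting of the ranked
coalescent state space: `X n j` denotes `|𝒳_n^j|`, the number of states with `n`
leaves whose last entry equals `j`.  Given the base case `𝒳₃ = {(0,3),(2,1)}`,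
the recursion `|𝒳_n^j| = |𝒳_{n-1}^j| + |𝒳_{n-1}^{j+1}|` for `n ≥ 4`, `j ≤ n-2`,
and the top cases coming from the initial states, we have `|𝒳_n^n| = 1`,
`|𝒳_n^{n-1}| = 0`, `|𝒳_n^j| = Fib(n-1-j)` for `1 ≤ j ≤ n-2`, and
`|𝒳_n^0| = Fib(n-1) - 1`. -/
theorem stmt0 (X : ℕ → ℕ → ℕ)
    (hbase : ∀ j, X 3 j = if j = 3 ∨ j = 1 then 1 else 0)
    (hrec : ∀ n, 4 ≤ n → ∀ j, j ≤ n - 2 → X n j = X (n - 1) j + X (n - 1) (j + 1))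
    (htop : ∀ n, 4 ≤ n → X n n = 1 ∧ X n (n - 1) = 0) :
    ∀ n, 3 ≤ n →
      X n n = 1 ∧ X n (n - 1) = 0 ∧
      (∀ j, 1 ≤ j → j ≤ n - 2 → X n j = Nat.fib (n - 1 - j)) ∧
      X n 0 = Nat.fib (n - 1) - 1 := by
  intro n hn
  induction n, hn using Nat.le_induction with
  | base =>
    refine ⟨by simp [hbase], by simp [hbase], ?_, by simp [hbase]⟩
    intro j h1 h2
    interval_cases j <;> simp [hbase]
  | succ n hn ih =>
    obtain ⟨ih1, ih2, ih3, ih4⟩ := ih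
    have h4 : 4 ≤ n + 1 := by omega
    obtain ⟨t1, t2⟩ := htop (n + 1) h4
    refine ⟨t1, t2, ?_, ?_⟩
    · intro j hj1 hj2
      have hrec' := hrec (n + 1) h4 j (by omega)
      simp only [Nat.add_sub_cancel] at hrec'
      rw [hrec']
      rcases eq_or_lt_of_le hj2 with h | h
      · -- j = n - 1
        have hj : j = n - 1 := by omega
        subst hj
        have : n - 1 + 1 = n := by omega
        rw [this, ih2, ih1]
        have : n + 1 - 1 - (n - 1) = 1 := by omega
        rw [this]; simp
      · rcases eq_or_lt_of_le (by omega : j ≤ n - 2) with h2 | h2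
        · -- j = n - 2
          have hj : j = n - 2 := h2.symm ▸ rfl
          have e1 : X n j = Nat.fib 1 := by
            rw [ih3 j hj1 (by omega)]
            congr 1; omega
          have e2 : j + 1 = n - 1 := by omega
          rw [e1, e2, ih2]
          have : n + 1 - 1 - j = 2 := by omega
          rw [this]; simp
        · -- j ≤ n - 3
          rw [ih3 j hj1 (by omega), ih3 (j + 1) (by omega) (by omega)]
          have e1 : n - 1 - j = n - 2 - j + 1 := by omega
          have e2 : n - 1 - (j + 1) = n - 2 - j := by omega
          have e3 : n + 1 - 1 - j = n - 2 - j + 2 := by omega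
          rw [e1, e2, e3, Nat.fib_add_two, Nat.add_comm]
    · have hrec' := hrec (n + 1) h4 0 (by omega)
      simp only [Nat.add_sub_cancel, Nat.zero_add] at hrec'
      rw [hrec', ih4, ih3 1 le_rfl (by omega)]
      have hpos : 1 ≤ Nat.fib (n - 1) := Nat.fib_pos.mpr (by omega)
      have e1 : n - 1 - 1 = n - 2 := by omega
      have e2 : n + 1 - 1 = n := by omega
      have e3 : n = n - 2 + 2 := by omega
      rw [e1, e2]
      have hfib : Nat.fib n = Nat.fib (n - 2) + Nat.fib (n - 1) := by
        have h := Nat.fib_add_two (n := n - 2)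
        rw [show n - 2 + 1 = n - 1 from by omega,
            show n - 2 + 2 = n from by omega] at h
        omega
      omega
end

section
/- The map φ from X_n^j to the disjoint union X_{n-1}^j ∪ X_{n-1}^{j+1} defined by deleting the last coordinate, φ(x_1,...,x_{n-1}) = (x_1,...,x_{n-2}), is a bijection for n ≥ 4 and 0 ≤ j ≤ n-2; consequently |X_n^j| = |X_{n-1}^j| + |X_{n-1}^{j+1}|. -/
open Finset

/-- A state of the ranked coalescent with `n` leaves: a vector `x ∈ ℕ^{n-1}`
decomposable into lineage indicator vectors.  All lineages start at a common
layer `m` (0-indexed), there are `m + 2` of them, each lineage is the indicator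
of an interval `[m, b l]`, and at most one lineage terminates at each layer. -/
def IsState (n : ℕ) (x : Fin (n - 1) → ℕ) : Prop :=
  ∃ (m : ℕ) (b : Fin (m + 2) → ℕ),
    (∀ l, m ≤ b l ∧ b l ≤ n - 2) ∧
    (∀ l l', b l < n - 2 → b l = b l' → l = l') ∧
    (∀ i : Fin (n - 1),
      x i = ∑ l : Fin (m + 2), if m ≤ (i : ℕ) ∧ (i : ℕ) ≤ b l then 1 else 0)

lemma isState_bound {n : ℕ} (hn : 2 ≤ n) {x : Fin (n - 1) → ℕ} (hx : IsState n x)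
    (i : Fin (n - 1)) : x i ≤ n := by
  obtain ⟨m, b, h1, h2, h3⟩ := hx
  have hm : m ≤ n - 2 := le_trans (h1 0).1 (h1 0).2
  calc x i = ∑ l : Fin (m + 2), if m ≤ (i : ℕ) ∧ (i : ℕ) ≤ b l then 1 else 0 := h3 i
    _ ≤ ∑ _l : Fin (m + 2), 1 := Finset.sum_le_sum (fun l _ => by split <;> omega)
    _ = m + 2 := by simp
    _ ≤ n := by omega

set_option maxHeartbeats 1600000 in
lemma finite_states (n : ℕ) (hn : 2 ≤ n) (p : (Fin (n - 1) → ℕ) → Prop) :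
    Finite {x : Fin (n - 1) → ℕ // IsState n x ∧ p x} := by
  apply Finite.of_injective (f := fun (x : {x : Fin (n - 1) → ℕ // IsState n x ∧ p x}) =>
    (fun i => (⟨min (x.1 i) n, by omega⟩ : Fin (n + 1))))
  intro x y h
  ext i
  have hx := isState_bound hn x.2.1 i
  have hy := isState_bound hn y.2.1 i
  have := congrFun h i
  simp only [Fin.mk.injEq] at this
  omega

set_option maxHeartbeats 1600000 in
lemma trunc_mem (n j : ℕ) (hn : 4 ≤ n) (hj : j ≤ n - 2) (x : Fin (n - 1) → ℕ)
    (hx : IsState n x) (hlast : x ⟨n - 2, Nat.sub_lt_sub_left (by omega) (by omega)⟩ = j) :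
    IsState (n - 1) (fun i : Fin (n - 1 - 1) => x (Fin.castLE (by omega) i)) ∧
      (x ⟨n - 3, by omega⟩ = j ∨ x ⟨n - 3, by omega⟩ = j + 1) := by
  obtain ⟨m, b, h1, h2, h3⟩ := hx
  have hv : ∀ k (hk : k < n - 1), x ⟨k, hk⟩
      = ∑ l : Fin (m + 2), if m ≤ k ∧ k ≤ b l then 1 else 0 := fun k hk => h3 ⟨k, hk⟩
  have hm2 : m ≤ n - 2 := le_trans (h1 0).1 (h1 0).2
  have hm3 : m ≤ n - 3 := by
    by_contra hcon
    have hm : m = n - 2 := by omega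
    have hx2 : x ⟨n - 2, by omega⟩ = m + 2 := by
      rw [hv (n - 2) (by omega)]
      rw [Finset.sum_congr rfl (fun l _ => if_pos ⟨by omega, by have := (h1 l).1; omega⟩)]
      simp
    omega
  -- the drop count
  set c : ℕ := ∑ l : Fin (m + 2), if b l = n - 3 then 1 else 0 with hc
  have hdec : x ⟨n - 3, by omega⟩ = x ⟨n - 2, by omega⟩ + c := by
    rw [hv (n - 3) (by omega), hv (n - 2) (by omega), hc, ← Finset.sum_add_distrib]
    refine Finset.sum_congr rfl (fun l _ => ?_)
    have := h1 l
    split_ifs <;> omega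
  have hc1 : c ≤ 1 := by
    have hcc : c = (univ.filter (fun l => b l = n - 3)).card := by
      rw [hc, Finset.sum_boole, Nat.cast_id]
    rw [hcc]
    refine Finset.card_le_one.mpr (fun a ha a' ha' => ?_)
    simp only [Finset.mem_filter] at ha ha'
    exact h2 a a' (by omega) (ha.2.trans ha'.2.symm)
  constructor
  · set b' : Fin (m + 2) → ℕ := fun l => if n - 3 ≤ b l then n - 3 else b l with hb'
    have hb'l : ∀ l, b' l = if n - 3 ≤ b l then n - 3 else b l := fun _ => rfl
    refine ⟨m, b', ?_, ?_, ?_⟩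
    · intro l; rw [hb'l]; have := h1 l; split <;> omega
    · intro l l' hlt heq
      rw [hb'l] at hlt heq; rw [hb'l l'] at heq
      have hbl := h1 l; have hbl' := h1 l'
      split_ifs at hlt heq <;> first | omega | exact h2 l l' (by omega) heq
    · intro i
      show x (Fin.castLE (by omega) i) = _
      rw [h3 (Fin.castLE (by omega) i)]
      simp only [Fin.coe_castLE]
      refine Finset.sum_congr rfl (fun l _ => ?_)
      show (if m ≤ (i : ℕ) ∧ (i : ℕ) ≤ b l then 1 else 0)
        = if m ≤ (i : ℕ) ∧ (i : ℕ) ≤ (if n - 3 ≤ b l then n - 3 else b l) then 1 else 0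
      have hi : (i : ℕ) < n - 1 - 1 := i.2
      have := h1 l
      split_ifs <;> omega
  · omega

set_option maxHeartbeats 1600000 in
lemma extend_exists (n j : ℕ) (hn : 4 ≤ n) (hj : j ≤ n - 2) (y : Fin (n - 1 - 1) → ℕ)
    (hy : IsState (n - 1) y)
    (hylast : y ⟨n - 3, by omega⟩ = j ∨ y ⟨n - 3, by omega⟩ = j + 1) :
    ∃ x : Fin (n - 1) → ℕ, IsState n x ∧ x ⟨n - 2, Nat.sub_lt_sub_left (by omega) (by omega)⟩ = j ∧
      ∀ i : Fin (n - 1 - 1), x (Fin.castLE (by omega) i) = y i := by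
  obtain ⟨m, b, h1, h2, h3⟩ := hy
  have hv : ∀ k (hk : k < n - 1 - 1), y ⟨k, hk⟩
      = ∑ l : Fin (m + 2), if m ≤ k ∧ k ≤ b l then 1 else 0 := fun k hk => h3 ⟨k, hk⟩
  have hm3 : m ≤ n - 3 := by have := h1 0; omega
  refine ⟨fun i : Fin (n - 1) => if h : (i : ℕ) < n - 1 - 1 then y ⟨i, h⟩ else j, ?_, ?_, ?_⟩
  · -- IsState n x
    rcases hylast with hl | hl
    · -- last entry j : push all lineages ending at n-3 up to n-2
      set b' : Fin (m + 2) → ℕ := fun l => if b l = n - 3 then n - 2 else b l with hb'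
      have hb'l : ∀ l, b' l = if b l = n - 3 then n - 2 else b l := fun _ => rfl
      refine ⟨m, b', ?_, ?_, ?_⟩
      · intro l; rw [hb'l]; have := h1 l; split <;> omega
      · intro l l' hlt heq
        rw [hb'l] at hlt heq; rw [hb'l l'] at heq
        have hbl := h1 l; have hbl' := h1 l'
        split_ifs at hlt heq <;> first | omega | exact h2 l l' (by omega) heq
      · intro i
        by_cases hi : (i : ℕ) < n - 1 - 1
        · show (if h : (i : ℕ) < n - 1 - 1 then y ⟨i, h⟩ else j) = _
          rw [dif_pos hi, hv i hi]
          refine Finset.sum_congr rfl (fun l _ => ?_)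
          show (if m ≤ (i : ℕ) ∧ (i : ℕ) ≤ b l then 1 else 0)
            = if m ≤ (i : ℕ) ∧ (i : ℕ) ≤ (if b l = n - 3 then n - 2 else b l) then 1 else 0
          have := h1 l
          split_ifs <;> omega
        · show (if h : (i : ℕ) < n - 1 - 1 then y ⟨i, h⟩ else j) = _
          rw [dif_neg hi]
          have hival : (i : ℕ) = n - 2 := by have := i.2; omega
          have hsum : j = ∑ l : Fin (m + 2), if b l = n - 3 then 1 else 0 := by
            rw [hl.symm.trans (hv (n - 3) (by omega))]
            refine Finset.sum_congr rfl (fun l _ => ?_)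
            have := h1 l; split_ifs <;> omega
          rw [hsum]
          refine Finset.sum_congr rfl (fun l _ => ?_)
          show (if b l = n - 3 then 1 else 0)
            = if m ≤ (i : ℕ) ∧ (i : ℕ) ≤ (if b l = n - 3 then n - 2 else b l) then 1 else 0
          have := h1 l
          split_ifs <;> omega
    · -- last entry j + 1: one lineage keeps ending at n-3, others pushed up
      have hsum : j + 1 = ∑ l : Fin (m + 2), if b l = n - 3 then 1 else 0 := by
        rw [hl.symm.trans (hv (n - 3) (by omega))]
        refine Finset.sum_congr rfl (fun l _ => ?_)
        have := h1 l; split_ifs <;> omega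
      have hex : ∃ l0, b l0 = n - 3 := by
        by_contra hcon
        push_neg at hcon
        rw [Finset.sum_congr rfl (fun l _ => if_neg (hcon l))] at hsum
        simp at hsum
      obtain ⟨l0, hb0⟩ := hex
      set b' : Fin (m + 2) → ℕ := fun l => if b l = n - 3 ∧ l ≠ l0 then n - 2 else b l with hb'
      have hb'l : ∀ l, b' l = if b l = n - 3 ∧ l ≠ l0 then n - 2 else b l := fun _ => rfl
      refine ⟨m, b', ?_, ?_, ?_⟩
      · intro l; rw [hb'l]; have := h1 l; split <;> omega
      · intro l l' hlt heq
        rw [hb'l] at hlt heq; rw [hb'l l'] at heq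
        have hbl := h1 l; have hbl' := h1 l'
        split_ifs at hlt heq with hA hB hB2
        · omega
        · omega
        · obtain ⟨hB1, _⟩ := hB2; omega
        · by_cases hcl : b l = n - 3
          · have hl0 : l = l0 := by
              by_contra hne; exact hA ⟨hcl, hne⟩
            have hl0' : l' = l0 := by
              by_contra hne; exact hB2 ⟨by omega, hne⟩
            rw [hl0, hl0']
          · exact h2 l l' (by omega) heq
      · intro i
        by_cases hi : (i : ℕ) < n - 1 - 1
        · show (if h : (i : ℕ) < n - 1 - 1 then y ⟨i, h⟩ else j) = _
          rw [dif_pos hi, hv i hi]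
          refine Finset.sum_congr rfl (fun l _ => ?_)
          show (if m ≤ (i : ℕ) ∧ (i : ℕ) ≤ b l then 1 else 0)
            = if m ≤ (i : ℕ) ∧ (i : ℕ) ≤ (if b l = n - 3 ∧ l ≠ l0 then n - 2 else b l)
              then 1 else 0
          have := h1 l
          by_cases hA : b l = n - 3 ∧ l ≠ l0
          · rw [if_pos hA]
            obtain ⟨hA1, _⟩ := hA
            exact if_congr (by omega) rfl rfl
          · rw [if_neg hA]
        · show (if h : (i : ℕ) < n - 1 - 1 then y ⟨i, h⟩ else j) = _
          rw [dif_neg hi]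
          have hival : (i : ℕ) = n - 2 := by have := i.2; omega
          have hsplit : (∑ l : Fin (m + 2), if b l = n - 3 then 1 else 0)
              = (∑ l : Fin (m + 2), if b l = n - 3 ∧ l ≠ l0 then 1 else 0) + 1 := by
            have key : ∀ l : Fin (m + 2), (if b l = n - 3 then 1 else 0)
                = (if b l = n - 3 ∧ l ≠ l0 then 1 else 0) + (if l = l0 then 1 else 0) := by
              intro l
              by_cases h : l = l0
              · subst h; simp [hb0]
              · by_cases h2' : b l = n - 3 <;> simp [h, h2']
            rw [Finset.sum_congr rfl (fun l _ => key l), Finset.sum_add_distrib]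
            congr 1
            simp
          have hred : (∑ l : Fin (m + 2),
                if m ≤ (i : ℕ) ∧ (i : ℕ) ≤ b' l then 1 else 0)
              = ∑ l : Fin (m + 2), if b l = n - 3 ∧ l ≠ l0 then 1 else 0 := by
            refine Finset.sum_congr rfl (fun l _ => ?_)
            show (if m ≤ (i : ℕ) ∧ (i : ℕ) ≤ (if b l = n - 3 ∧ l ≠ l0 then n - 2 else b l)
                then 1 else 0)
              = if b l = n - 3 ∧ l ≠ l0 then 1 else 0
            have := h1 l
            by_cases hA : b l = n - 3 ∧ l ≠ l0
            · rw [if_pos hA, if_pos hA, if_pos (⟨by omega, by omega⟩ : m ≤ (i:ℕ) ∧ (i:ℕ) ≤ n - 2)]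
            · rw [if_neg hA, if_neg hA, if_neg (by omega)]
          rw [hred]
          omega
  · show (if h : (n - 2 : ℕ) < n - 1 - 1 then y ⟨n - 2, h⟩ else j) = j
    rw [dif_neg (by omega)]
  · intro i
    show (if h : ((Fin.castLE (by omega) i : Fin (n - 1)) : ℕ) < n - 1 - 1
        then y ⟨_, h⟩ else j) = y i
    rw [dif_pos (show ((Fin.castLE (by omega) i : Fin (n - 1)) : ℕ) < n - 1 - 1 from i.2)]
    exact congrArg y (Fin.ext rfl)

set_option maxHeartbeats 1600000 in
/-- For `n ≥ 4` and `0 ≤ j ≤ n - 2`, the map deleting the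
last coordinate is a bijection from `𝒳_n^j` (states with last entry `j`) onto
the disjoint union `𝒳_{n-1}^j ∪ 𝒳_{n-1}^{j+1}`; consequently
`|𝒳_n^j| = |𝒳_{n-1}^j| + |𝒳_{n-1}^{j+1}|`. -/
theorem stmt16 (n j : ℕ) (hn : 4 ≤ n) (hj : j ≤ n - 2) :
    (∃ φ : {x : Fin (n - 1) → ℕ // IsState n x ∧ x ⟨n - 2, by omega⟩ = j} ≃
        {y : Fin (n - 2) → ℕ // IsState (n - 1) y ∧
          (y ⟨n - 3, by omega⟩ = j ∨ y ⟨n - 3, by omega⟩ = j + 1)},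
      ∀ x (i : Fin (n - 2)), ((φ x : {y : Fin (n - 2) → ℕ //
          IsState (n - 1) y ∧ (y ⟨n - 3, by omega⟩ = j ∨ y ⟨n - 3, by omega⟩ = j + 1)}) : _).1 i
        = x.1 (Fin.castLE (by omega) i)) ∧
    Nat.card {x : Fin (n - 1) → ℕ // IsState n x ∧ x ⟨n - 2, by omega⟩ = j}
      = Nat.card {y : Fin (n - 2) → ℕ // IsState (n - 1) y ∧ y ⟨n - 3, by omega⟩ = j}
        + Nat.card {y : Fin (n - 2) → ℕ // IsState (n - 1) y ∧ y ⟨n - 3, by omega⟩ = j + 1} := by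
  classical
  -- the truncation map
  let f : {x : Fin (n - 1) → ℕ // IsState n x ∧ x ⟨n - 2, by omega⟩ = j} →
      {y : Fin (n - 2) → ℕ // IsState (n - 1) y ∧
        (y ⟨n - 3, by omega⟩ = j ∨ y ⟨n - 3, by omega⟩ = j + 1)} := fun x =>
    ⟨fun i => x.1 (Fin.castLE (by omega) i),
      (trunc_mem n j hn hj x.1 x.2.1 x.2.2).1,
      (trunc_mem n j hn hj x.1 x.2.1 x.2.2).2⟩
  have hinj : Function.Injective f := by
    intro x x' h
    have h' := congrArg Subtype.val h
    apply Subtype.ext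
    funext i
    by_cases hi : (i : ℕ) < n - 2
    · exact congrFun h' ⟨i, hi⟩
    · have hieq : i = ⟨n - 2, by omega⟩ :=
        Fin.ext (show (i : ℕ) = n - 2 by have h2i := i.2; omega)
      rw [hieq, x.2.2, x'.2.2]
  have hsurj : Function.Surjective f := by
    intro y
    obtain ⟨x, hst, hlastx, hcoord⟩ := extend_exists n j hn hj y.1 y.2.1 y.2.2
    exact ⟨⟨x, hst, hlastx⟩, Subtype.ext (funext fun i => hcoord i)⟩
  refine ⟨⟨Equiv.ofBijective f ⟨hinj, hsurj⟩, fun x i => rfl⟩, ?_⟩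
  -- cardinalities
  have fin1 : Finite {x : Fin (n - 1) → ℕ // IsState n x ∧ x ⟨n - 2, by omega⟩ = j} :=
    finite_states n (by omega) _
  have fin2 : Finite {y : Fin (n - 2) → ℕ // IsState (n - 1) y ∧ y ⟨n - 3, by omega⟩ = j} :=
    finite_states (n - 1) (by omega) _
  have fin3 : Finite {y : Fin (n - 2) → ℕ // IsState (n - 1) y ∧ y ⟨n - 3, by omega⟩ = j + 1} :=
    finite_states (n - 1) (by omega) _
  have hdisj : Disjoint (fun y : Fin (n - 2) → ℕ => IsState (n - 1) y ∧ y ⟨n - 3, by omega⟩ = j)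
      (fun y : Fin (n - 2) → ℕ => IsState (n - 1) y ∧ y ⟨n - 3, by omega⟩ = j + 1) :=
    Pi.disjoint_iff.mpr fun y => Prop.disjoint_iff.mpr (by rintro ⟨⟨-, h1⟩, ⟨-, h2⟩⟩; omega)
  have e2 : {y : Fin (n - 2) → ℕ // IsState (n - 1) y ∧
        (y ⟨n - 3, by omega⟩ = j ∨ y ⟨n - 3, by omega⟩ = j + 1)} ≃
      {y : Fin (n - 2) → ℕ // IsState (n - 1) y ∧ y ⟨n - 3, by omega⟩ = j} ⊕
      {y : Fin (n - 2) → ℕ // IsState (n - 1) y ∧ y ⟨n - 3, by omega⟩ = j + 1} :=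
    (Equiv.subtypeEquivRight (fun y => and_or_left)).trans
      (subtypeOrEquiv _ _ hdisj)
  rw [Nat.card_congr (Equiv.ofBijective f ⟨hinj, hsurj⟩), Nat.card_congr e2, Nat.card_sum]
end
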